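/- arXiv:2107.00871 — 5 statements merged into one kernel-verified Lean document; each statement's English description precedes it below -/
import Mathlib

section
/- The full-conditional manifold is e-flat: if q0 and q1 are everywhere-positive distributions belonging to E(θ) and λ ∈ [0,1], then the normalized geometric mixture qλ(x) = q0(x)^{1−λ}·q1(x)^{λ}/Z with Z = Σ_{x'} q0(x')^{1−λ}·q1(x')^{λ} is a distribution that also belongs to E(θ), i.e. qλ(x) = qλ₋ᵢ(x)·θ(xᵢ,x) for all x. -/
open Finset

variable {ι : Type} [Fintype ι] [DecidableEq ι] [Nonempty ι]
  {α : ι → Type} [∀ i, Fintype (α i)] [∀ i, DecidableEq (α i)] [∀ i, Nonempty (α i)]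

/-- `p` is a probability distribution on the joint space `X = Π j, α j`. -/
def IsDist (p : (∀ j, α j) → ℝ) : Prop :=
  (∀ x, 0 ≤ p x) ∧ ∑ x, p x = 1

/-- The `i`-marginal `p₋ᵢ(x) = Σ_{a ∈ α i} p(x[i↦a])`. -/
noncomputable def marg (p : (∀ j, α j) → ℝ) (i : ι) (x : ∀ j, α j) : ℝ :=
  ∑ a, p (Function.update x i a)

/-- `θ` is a conditional probability table (CPT) at node `i`. -/
def IsCPT (i : ι) (θ : α i → (∀ j, α j) → ℝ) : Prop :=
  (∀ a x, 0 < θ a x) ∧ (∀ x, ∑ a, θ a x = 1) ∧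
  (∀ a x (b : α i), θ a (Function.update x i b) = θ a x)

/-- `q` belongs to the full-conditional manifold `E(θ)`. -/
def memE (i : ι) (θ : α i → (∀ j, α j) → ℝ) (q : (∀ j, α j) → ℝ) : Prop :=
  ∀ x, q x = marg q i x * θ (x i) x

/-! Members of `E(θ)` are exactly the functions `m x * θ (x i) x` with `m` independent of the
`i`-th coordinate, `m` then being the `i`-marginal. For exponents with `s + t = 1` the product
`q₀ ^ s * q₁ ^ t` of two such functions keeps this form, since `θ ^ s * θ ^ t = θ`, and
normalising only divides by a constant. -/

section
-- Shadows the variables above, so that these lemmas carry only the instances they use.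
variable {ι : Type} [DecidableEq ι] {α : ι → Type} [∀ i, Fintype (α i)]

theorem marg_update_self (p : (∀ j, α j) → ℝ) (i : ι) (x : ∀ j, α j) (b : α i) :
    marg p i (Function.update x i b) = marg p i x := by
  simp only [marg, Function.update_idem]

theorem marg_div_const (p : (∀ j, α j) → ℝ) (c : ℝ) (i : ι) (x : ∀ j, α j) :
    marg (fun y => p y / c) i x = marg p i x / c :=
  (Finset.sum_div _ _ _).symm

theorem memE.div_const {i : ι} {θ : α i → (∀ j, α j) → ℝ} {q : (∀ j, α j) → ℝ}
    (hq : memE i θ q) (c : ℝ) : memE i θ (fun x => q x / c) := fun x => by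
  change q x / c = marg (fun y => q y / c) i x * θ (x i) x
  rw [marg_div_const, div_mul_eq_mul_div, ← hq x]

theorem marg_eq_of_eq_mul {i : ι} {θ : α i → (∀ j, α j) → ℝ} (hθ : IsCPT i θ)
    {q m : (∀ j, α j) → ℝ} (hm : ∀ x b, m (Function.update x i b) = m x)
    (hq : ∀ x, q x = m x * θ (x i) x) (x : ∀ j, α j) : marg q i x = m x := by
  obtain ⟨-, hθsum, hθinv⟩ := hθ
  calc marg q i x = ∑ a, m x * θ a x := by
        refine Finset.sum_congr rfl fun a _ => ?_
        rw [hq, hm, hθinv, Function.update_self]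
    _ = m x := by rw [← Finset.mul_sum, hθsum, mul_one]

theorem memE_of_eq_mul {i : ι} {θ : α i → (∀ j, α j) → ℝ} (hθ : IsCPT i θ)
    {q m : (∀ j, α j) → ℝ} (hm : ∀ x b, m (Function.update x i b) = m x)
    (hq : ∀ x, q x = m x * θ (x i) x) : memE i θ q := fun x => by
  rw [marg_eq_of_eq_mul hθ hm hq, hq]

theorem marg_nonneg {p : (∀ j, α j) → ℝ} (hp : ∀ x, 0 ≤ p x) (i : ι) (x : ∀ j, α j) :
    0 ≤ marg p i x :=
  Finset.sum_nonneg fun _ _ => hp _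

theorem memE_rpow_mul_rpow {i : ι} {θ : α i → (∀ j, α j) → ℝ} (hθ : IsCPT i θ)
    {q₀ q₁ : (∀ j, α j) → ℝ} (h₀ : ∀ x, 0 ≤ q₀ x) (h₁ : ∀ x, 0 ≤ q₁ x)
    (hE₀ : memE i θ q₀) (hE₁ : memE i θ q₁) {s t : ℝ} (hst : s + t = 1) :
    memE i θ (fun x => q₀ x ^ s * q₁ x ^ t) := by
  refine memE_of_eq_mul hθ (m := fun x => marg q₀ i x ^ s * marg q₁ i x ^ t)
    (fun x b => by simp only [marg_update_self]) fun x => ?_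
  have hθx := (hθ.1 (x i) x).le
  calc q₀ x ^ s * q₁ x ^ t
      = (marg q₀ i x * θ (x i) x) ^ s * (marg q₁ i x * θ (x i) x) ^ t := by rw [← hE₀, ← hE₁]
    _ = marg q₀ i x ^ s * marg q₁ i x ^ t * (θ (x i) x ^ s * θ (x i) x ^ t) := by
        rw [Real.mul_rpow (marg_nonneg h₀ i x) hθx, Real.mul_rpow (marg_nonneg h₁ i x) hθx]
        ring
    _ = marg q₀ i x ^ s * marg q₁ i x ^ t * θ (x i) x := by
        rw [← Real.rpow_add' hθx (hst ▸ one_ne_zero), hst, Real.rpow_one]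

theorem isDist_div_sum [Fintype ι] {g : (∀ j, α j) → ℝ} (hg : ∀ x, 0 ≤ g x)
    (hZ : ∑ x, g x ≠ 0) : IsDist (fun x => g x / ∑ x', g x') :=
  ⟨fun x => div_nonneg (hg x) (Finset.sum_nonneg fun x _ => hg x),
    by rw [← Finset.sum_div, div_self hZ]⟩

end

theorem fullConditionalManifold_eFlat_general (i : ι) (θ : α i → (∀ j, α j) → ℝ)
    (hθ : IsCPT i θ) (q0 q1 : (∀ j, α j) → ℝ)
    (h0pos : ∀ x, 0 < q0 x) (h1pos : ∀ x, 0 < q1 x)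
    (hE0 : memE i θ q0) (hE1 : memE i θ q1)
    (l : ℝ) :
    IsDist (fun x => q0 x ^ (1 - l) * q1 x ^ l / ∑ x', q0 x' ^ (1 - l) * q1 x' ^ l) ∧
    memE i θ (fun x => q0 x ^ (1 - l) * q1 x ^ l / ∑ x', q0 x' ^ (1 - l) * q1 x' ^ l) := by
  have hmix_pos (x : ∀ j, α j) : 0 < q0 x ^ (1 - l) * q1 x ^ l :=
    mul_pos (Real.rpow_pos_of_pos (h0pos x) _) (Real.rpow_pos_of_pos (h1pos x) _)
  have hZ : ∑ x, q0 x ^ (1 - l) * q1 x ^ l ≠ 0 :=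
    (Finset.sum_pos (fun x _ => hmix_pos x) Finset.univ_nonempty).ne'
  exact ⟨isDist_div_sum (fun x => (hmix_pos x).le) hZ,
    (memE_rpow_mul_rpow hθ (fun x => (h0pos x).le) (fun x => (h1pos x).le) hE0 hE1
      (sub_add_cancel 1 l)).div_const _⟩

/-- Theorem 1, e-flatness: the full-conditional manifold is e-flat:
the normalized geometric mixture of two positive members of `E(θ)` is again a
distribution belonging to `E(θ)`. -/
theorem fullConditionalManifold_eFlat (i : ι) (θ : α i → (∀ j, α j) → ℝ)
    (hθ : IsCPT i θ) (q0 q1 : (∀ j, α j) → ℝ)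
    (h0 : IsDist q0) (h1 : IsDist q1)
    (h0pos : ∀ x, 0 < q0 x) (h1pos : ∀ x, 0 < q1 x)
    (hE0 : memE i θ q0) (hE1 : memE i θ q1)
    (l : ℝ) (hl0 : 0 ≤ l) (hl1 : l ≤ 1) :
    IsDist (fun x => q0 x ^ (1 - l) * q1 x ^ l / ∑ x', q0 x' ^ (1 - l) * q1 x' ^ l) ∧
    memE i θ (fun x => q0 x ^ (1 - l) * q1 x ^ l / ∑ x', q0 x' ^ (1 - l) * q1 x' ^ l) :=
  fullConditionalManifold_eFlat_general i θ hθ q0 q1 h0pos h1pos hE0 hE1 l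
end

section
/- m-projection onto a full-conditional manifold (Theorem 2): let p be a positive distribution and θ a CPT at node i. Define q*(x) = p₋ᵢ(x)·θ(xᵢ,x). Then q* is a positive distribution belonging to E(θ), and for every positive distribution q belonging to E(θ), KL(p‖q*) ≤ KL(p‖q); moreover KL(p‖q*) = Σ_x p(x)·log( p(xᵢ|x₋ᵢ) / θ(xᵢ,x) ). -/
/-!
Since `θ` sums to one over `α i` and does not depend on `xᵢ`, `q*` has the same `i`-marginal as
`p`; hence `q*` lies in `E(θ)` and is a distribution. For `q = q₋ᵢ·θ` in `E(θ)` the factors `θ`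
cancel in `KL(p‖q) - KL(p‖q*) = Σ p log(p₋ᵢ/q₋ᵢ)`, and since `log(p₋ᵢ/q₋ᵢ)` does not depend on
`xᵢ`, this is `|α i|⁻¹ Σ p₋ᵢ log(p₋ᵢ/q₋ᵢ) ≥ 0` by Gibbs' inequality for the marginals.
-/

open Finset

variable {ι : Type} [Fintype ι] [DecidableEq ι] [Nonempty ι]
  {α : ι → Type} [∀ i, Fintype (α i)] [∀ i, DecidableEq (α i)] [∀ i, Nonempty (α i)]

/-- The full conditional `p(xᵢ|x₋ᵢ) = p(x)/p₋ᵢ(x)`. -/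
noncomputable def fullCond (p : (∀ j, α j) → ℝ) (i : ι) (x : ∀ j, α j) : ℝ :=
  p x / marg p i x

noncomputable def KL (p q : (∀ j, α j) → ℝ) : ℝ :=
  ∑ x, p x * Real.log (p x / q x)

open Function InformationTheory

/-- Gibbs' inequality, from `0 ≤ klFun t = t log t + 1 - t` at `t = f x / g x`. -/
theorem sum_mul_log_div_nonneg {X : Type*} [Fintype X] {f g : X → ℝ}
    (hf : ∀ x, 0 ≤ f x) (hg : ∀ x, 0 < g x) (hfg : ∑ x, f x = ∑ x, g x) :
    0 ≤ ∑ x, f x * Real.log (f x / g x) := by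
  have hterm : ∀ x, g x * klFun (f x / g x) = f x * Real.log (f x / g x) + g x - f x := by
    intro x
    rw [klFun_apply, mul_sub, mul_add, ← mul_assoc, mul_div_cancel₀ _ (hg x).ne']
    ring
  have hsum : 0 ≤ ∑ x, g x * klFun (f x / g x) :=
    sum_nonneg fun x _ => mul_nonneg (hg x).le (klFun_nonneg (div_nonneg (hf x) (hg x).le))
  simp only [hterm, sum_sub_distrib, sum_add_distrib, hfg] at hsum
  linarith

section

variable {ι : Type} [DecidableEq ι] {α : ι → Type} [∀ i, Fintype (α i)]
  {i : ι} {θ : α i → (∀ j, α j) → ℝ} {p q : (∀ j, α j) → ℝ}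

theorem marg_update (p : (∀ j, α j) → ℝ) (i : ι) (x : ∀ j, α j) (b : α i) :
    marg p i (update x i b) = marg p i x := by
  simp only [marg, update_idem]

theorem marg_pos [Nonempty (α i)] (hp : ∀ x, 0 < p x) (x : ∀ j, α j) : 0 < marg p i x :=
  sum_pos (fun _ _ => hp _) univ_nonempty

theorem IsCPT.marg_mul (hθ : IsCPT i θ) {g : (∀ j, α j) → ℝ}
    (hg : ∀ x b, g (update x i b) = g x) (x : ∀ j, α j) :
    marg (fun y => g y * θ (y i) y) i x = g x := by
  simp only [marg, hg, update_self, hθ.2.2, ← mul_sum, hθ.2.1, mul_one]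

/-- The paper's `q*`. -/
noncomputable def mProjection (i : ι) (θ : α i → (∀ j, α j) → ℝ) (p : (∀ j, α j) → ℝ)
    (x : ∀ j, α j) : ℝ :=
  marg p i x * θ (x i) x

theorem IsCPT.marg_mProjection (hθ : IsCPT i θ) (p : (∀ j, α j) → ℝ) :
    marg (mProjection i θ p) i = marg p i :=
  funext (hθ.marg_mul (marg_update p i))

theorem IsCPT.memE_mProjection (hθ : IsCPT i θ) (p : (∀ j, α j) → ℝ) :
    memE i θ (mProjection i θ p) := by
  intro x
  rw [hθ.marg_mProjection]
  rfl

theorem IsCPT.mProjection_pos [Nonempty (α i)] (hθ : IsCPT i θ) (hp : ∀ x, 0 < p x)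
    (x : ∀ j, α j) : 0 < mProjection i θ p x :=
  mul_pos (marg_pos hp x) (hθ.1 _ x)

variable [Fintype ι]

def updateSwap (i : ι) : Equiv.Perm ((∀ j, α j) × α i) :=
  Involutive.toPerm (fun xa => (update xa.1 i xa.2, xa.1 i)) fun xa => by simp

theorem sum_sum_update (i : ι) (f : (∀ j, α j) → ℝ) :
    ∑ x, ∑ a, f (update x i a) = Fintype.card (α i) * ∑ x, f x := by
  have h := Fintype.sum_equiv (updateSwap i) (fun xa => f (update xa.1 i xa.2)) (fun xa => f xa.1)
    fun _ => rfl
  simpa only [Fintype.sum_prod_type, sum_const, card_univ, nsmul_eq_mul, mul_sum] using h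

theorem sum_marg (p : (∀ j, α j) → ℝ) (i : ι) :
    ∑ x, marg p i x = Fintype.card (α i) * ∑ x, p x :=
  sum_sum_update i p

theorem sum_marg_mul_of_update_invariant {g : (∀ j, α j) → ℝ}
    (hg : ∀ x b, g (update x i b) = g x) (p : (∀ j, α j) → ℝ) :
    ∑ x, marg p i x * g x = Fintype.card (α i) * ∑ x, p x * g x := by
  rw [← sum_sum_update i]
  refine sum_congr rfl fun x _ => ?_
  simp only [marg, sum_mul, hg]

theorem IsCPT.sum_mProjection [Nonempty (α i)] (hθ : IsCPT i θ) (p : (∀ j, α j) → ℝ) :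
    ∑ x, mProjection i θ p x = ∑ x, p x := by
  have hcard : (Fintype.card (α i) : ℝ) ≠ 0 := by positivity
  have h := sum_marg (mProjection i θ p) i
  rw [hθ.marg_mProjection, sum_marg] at h
  exact (mul_left_cancel₀ hcard h).symm

theorem IsCPT.isDist_mProjection [Nonempty (α i)] (hθ : IsCPT i θ) (hp : IsDist p) :
    IsDist (mProjection i θ p) :=
  ⟨fun x => mul_nonneg (sum_nonneg fun _ _ => hp.1 _) (hθ.1 _ x).le,
    (hθ.sum_mProjection p).trans hp.2⟩

theorem KL_mProjection (i : ι) (θ : α i → (∀ j, α j) → ℝ) (p : (∀ j, α j) → ℝ) :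
    KL p (mProjection i θ p) = ∑ x, p x * Real.log (fullCond p i x / θ (x i) x) := by
  simp only [KL, mProjection, fullCond, div_div]

theorem IsCPT.KL_sub_KL_mProjection [Nonempty (α i)] (hθ : IsCPT i θ) (hp : ∀ x, 0 < p x)
    (hq : ∀ x, 0 < q x) (hqE : memE i θ q) :
    KL p q - KL p (mProjection i θ p) = ∑ x, p x * Real.log (marg p i x / marg q i x) := by
  simp only [KL, ← sum_sub_distrib, ← mul_sub]
  refine sum_congr rfl fun x _ => congrArg (p x * ·) ?_
  have hP := (marg_pos (i := i) hp x).ne'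
  have hQ := (marg_pos (i := i) hq x).ne'
  have hθx := (hθ.1 (x i) x).ne'
  rw [hqE x, mProjection, Real.log_div (hp x).ne' (mul_ne_zero hQ hθx),
    Real.log_div (hp x).ne' (mul_ne_zero hP hθx), Real.log_div hP hQ,
    Real.log_mul hQ hθx, Real.log_mul hP hθx]
  ring

theorem sum_mul_log_marg_div_nonneg [Nonempty (α i)] (hp : ∀ x, 0 ≤ p x) (hq : ∀ x, 0 < q x)
    (hpq : ∑ x, p x = ∑ x, q x) :
    0 ≤ ∑ x, p x * Real.log (marg p i x / marg q i x) := by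
  have hgibbs : 0 ≤ ∑ x, marg p i x * Real.log (marg p i x / marg q i x) :=
    sum_mul_log_div_nonneg (fun x => sum_nonneg fun _ _ => hp _) (marg_pos hq)
      (by rw [sum_marg, sum_marg, hpq])
  rw [sum_marg_mul_of_update_invariant (fun x b => by rw [marg_update, marg_update])] at hgibbs
  exact nonneg_of_mul_nonneg_right hgibbs (by positivity)

theorem IsCPT.KL_mProjection_le [Nonempty (α i)] (hθ : IsCPT i θ) (hp : IsDist p)
    (hppos : ∀ x, 0 < p x) (hq : IsDist q) (hqpos : ∀ x, 0 < q x) (hqE : memE i θ q) :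
    KL p (mProjection i θ p) ≤ KL p q := by
  have hdiff := hθ.KL_sub_KL_mProjection hppos hqpos hqE
  have hnonneg := sum_mul_log_marg_div_nonneg (i := i) hp.1 hqpos (hp.2.trans hq.2.symm)
  linarith

end

/-- Theorem 2: `q*(x) = p₋ᵢ(x)·θ(xᵢ,x)` is the m-projection of `p`
onto `E(θ)`: it is a positive distribution in `E(θ)` minimizing `KL(p‖·)` over
positive distributions in `E(θ)`, and the minimum value is
`Σ_x p(x)·log( p(xᵢ|x₋ᵢ)/θ(xᵢ,x) )`. -/
theorem mProjection_onto_fullConditionalManifold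
    (i : ι) (θ : α i → (∀ j, α j) → ℝ) (hθ : IsCPT i θ)
    (p : (∀ j, α j) → ℝ) (hp : IsDist p) (hppos : ∀ x, 0 < p x) :
    IsDist (fun x => marg p i x * θ (x i) x) ∧
    (∀ x, 0 < marg p i x * θ (x i) x) ∧
    memE i θ (fun x => marg p i x * θ (x i) x) ∧
    (∀ q : (∀ j, α j) → ℝ, IsDist q → (∀ x, 0 < q x) → memE i θ q →
      KL p (fun x => marg p i x * θ (x i) x) ≤ KL p q) ∧
    KL p (fun x => marg p i x * θ (x i) x)
      = ∑ x, p x * Real.log (fullCond p i x / θ (x i) x) :=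
  ⟨hθ.isDist_mProjection hp, hθ.mProjection_pos hppos, hθ.memE_mProjection p,
    fun _ hq hqpos hqE => hθ.KL_mProjection_le hp hppos hq hqpos hqE, KL_mProjection i θ p⟩
end

section
/- Theorem 3 (bound on the stationary distribution of random-pseudo-Gibbs sampling): let c : ι → ℝ with c_i ≥ 0 for all i and Σ_i c_i = 1, for each i ∈ ι let θ_i be a CPT at node i, let p be a positive distribution, and let π be a positive distribution satisfying the stationarity condition π(x) = Σ_i c_i · π₋ᵢ(x) · θ_i(xᵢ,x) for all x. Then FC(p‖π) ≤ Σ_i c_i · Σ_x p(x)·log( p(xᵢ|x₋ᵢ) / θ_i(xᵢ,x) ), where the right-hand side equals Σ_i c_i·KL(p‖E(θ_i)). -/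
open Finset

variable {ι : Type} [Fintype ι] [DecidableEq ι] [Nonempty ι]
  {α : ι → Type} [∀ i, Fintype (α i)] [∀ i, DecidableEq (α i)] [∀ i, Nonempty (α i)]

/-! Stationarity says that `π x` is the `c`-weighted mean of the numbers `π₋ᵢ(x) · θᵢ(xᵢ, x)`.
Since `π(xᵢ|x₋ᵢ) / θᵢ(xᵢ, x) = π x / (π₋ᵢ(x) · θᵢ(xᵢ, x))`, concavity of `log` (Jensen) gives
`Σᵢ cᵢ log (π(xᵢ|x₋ᵢ) / θᵢ(xᵢ, x)) ≥ 0` for every `x`. The difference of the two sides of the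
bound is exactly the `p`-average of this quantity. -/

theorem Real.sum_mul_log_le_log_sum_mul {κ : Type*} (s : Finset κ) (w m : κ → ℝ)
    (hw₀ : ∀ i ∈ s, 0 ≤ w i) (hw₁ : ∑ i ∈ s, w i = 1) (hm : ∀ i ∈ s, 0 < m i) :
    ∑ i ∈ s, w i * log (m i) ≤ log (∑ i ∈ s, w i * m i) := by
  simpa only [smul_eq_mul] using strictConcaveOn_log_Ioi.concaveOn.le_map_sum hw₀ hw₁ hm

theorem Real.sum_mul_log_sum_mul_div_nonneg {κ : Type*} (s : Finset κ) (w m : κ → ℝ)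
    (hw₀ : ∀ i ∈ s, 0 ≤ w i) (hw₁ : ∑ i ∈ s, w i = 1) (hm : ∀ i ∈ s, 0 < m i) :
    0 ≤ ∑ i ∈ s, w i * log ((∑ j ∈ s, w j * m j) / m i) := by
  have hy : 0 < ∑ j ∈ s, w j * m j := by
    simpa only [smul_eq_mul, Set.mem_Ioi] using (convex_Ioi (0 : ℝ)).sum_mem hw₀ hw₁ hm
  have hlog : ∀ i ∈ s, w i * log ((∑ j ∈ s, w j * m j) / m i) =
      w i * log (∑ j ∈ s, w j * m j) - w i * log (m i) := fun i hi => by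
    rw [log_div hy.ne' (hm i hi).ne', mul_sub]
  rw [sum_congr rfl hlog, sum_sub_distrib, ← sum_mul, hw₁, one_mul]
  exact sub_nonneg.2 (sum_mul_log_le_log_sum_mul s w m hw₀ hw₁ hm)

theorem Real.log_div_sub_log_div {a b c : ℝ} (ha : a ≠ 0) (hb : b ≠ 0) (hc : c ≠ 0) :
    log (a / b) - log (a / c) = log (c / b) := by
  rw [← log_div (div_ne_zero ha hb) (div_ne_zero ha hc), div_div_div_cancel_left' _ _ ha]

theorem stationary_FC_bound_general
    (c : ι → ℝ) (hc0 : ∀ i, 0 ≤ c i) (hc1 : ∑ i, c i = 1)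
    (θ : ∀ i, α i → (∀ j, α j) → ℝ) (hθ : ∀ i, IsCPT i (θ i))
    (p : (∀ j, α j) → ℝ) (hppos : ∀ x, 0 < p x)
    (π : (∀ j, α j) → ℝ) (hπpos : ∀ x, 0 < π x)
    (hstat : ∀ x, π x = ∑ i, c i * (marg π i x * θ i (x i) x)) :
    (∑ i, c i * ∑ x, p x * Real.log (fullCond p i x / fullCond π i x)) ≤
      ∑ i, c i * ∑ x, p x * Real.log (fullCond p i x / θ i (x i) x) := by
  have marg_pos : ∀ q : (∀ j, α j) → ℝ, (∀ x, 0 < q x) → ∀ i x, 0 < marg q i x :=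
    fun q hq i x => sum_pos (fun a _ => hq _) univ_nonempty
  have hθpos : ∀ i x, 0 < θ i (x i) x := fun i x => (hθ i).1 _ _
  have pointwise : ∀ x, 0 ≤ ∑ i, c i * Real.log (fullCond π i x / θ i (x i) x) := by
    intro x
    simp only [fullCond, div_div]
    rw [hstat x]
    exact Real.sum_mul_log_sum_mul_div_nonneg _ c (fun i => marg π i x * θ i (x i) x)
      (fun i _ => hc0 i) hc1 fun i _ => mul_pos (marg_pos π hπpos i x) (hθpos i x)
  have log_ratio : ∀ i x, Real.log (fullCond p i x / θ i (x i) x) -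
      Real.log (fullCond p i x / fullCond π i x) = Real.log (fullCond π i x / θ i (x i) x) :=
    fun i x => Real.log_div_sub_log_div (div_pos (hppos x) (marg_pos p hppos i x)).ne'
      (hθpos i x).ne' (div_pos (hπpos x) (marg_pos π hπpos i x)).ne'
  rw [← sub_nonneg]
  calc 0 ≤ ∑ x, p x * ∑ i, c i * Real.log (fullCond π i x / θ i (x i) x) :=
        sum_nonneg fun x _ => mul_nonneg (hppos x).le (pointwise x)
    _ = ∑ i, c i * ∑ x, p x * (Real.log (fullCond p i x / θ i (x i) x) -
          Real.log (fullCond p i x / fullCond π i x)) := by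
        simp_rw [log_ratio, mul_sum]
        rw [sum_comm]
        exact sum_congr rfl fun i _ => sum_congr rfl fun x _ => mul_left_comm _ _ _
    _ = _ := by simp only [mul_sub, sum_sub_distrib]

/-- Theorem 3: bound on the stationary distribution of
random-pseudo-Gibbs sampling: `FC(p‖π) ≤ Σ_i c_i·KL(p‖E(θ_i))`, where the
right-hand side is `Σ_i c_i·Σ_x p(x)·log( p(xᵢ|x₋ᵢ)/θ_i(xᵢ,x) )`. -/
theorem stationary_FC_bound
    (c : ι → ℝ) (hc0 : ∀ i, 0 ≤ c i) (hc1 : ∑ i, c i = 1)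
    (θ : ∀ i, α i → (∀ j, α j) → ℝ) (hθ : ∀ i, IsCPT i (θ i))
    (p : (∀ j, α j) → ℝ) (hp : IsDist p) (hppos : ∀ x, 0 < p x)
    (π : (∀ j, α j) → ℝ) (hπ : IsDist π) (hπpos : ∀ x, 0 < π x)
    (hstat : ∀ x, π x = ∑ i, c i * (marg π i x * θ i (x i) x)) :
    (∑ i, c i * ∑ x, p x * Real.log (fullCond p i x / fullCond π i x)) ≤
      ∑ i, c i * ∑ x, p x * Real.log (fullCond p i x / θ i (x i) x) :=
  stationary_FC_bound_general c hc0 hc1 θ hθ p hppos π hπpos hstat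
end

section
/- Decomposition of the divergence to a full-conditional manifold in terms of conditional entropies: let p be a positive distribution, i ∈ ι, S ⊆ ι with i ∉ S, and θ a CPT at node i whose value θ(a,x) depends only on the coordinates of x in S. Then Σ_x p(x)·log( p(xᵢ|x₋ᵢ) / θ(xᵢ,x) ) = Σ_{y} p_S(y) · Σ_{a} p(a|y)·log( p(a|y)/θ_S(a,y) ) + H_p(Xᵢ|X_S) − H_p(Xᵢ|X₋ᵢ), where θ_S(a,y) denotes the common value of θ(a,x) over x with x_S = y. -/
open Finset

variable {ι : Type} [Fintype ι] [DecidableEq ι] [Nonempty ι]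
  {α : ι → Type} [∀ i, Fintype (α i)] [∀ i, DecidableEq (α i)] [∀ i, Nonempty (α i)]

/-- Restriction of `x` to the coordinates in `S`. -/
def restr (S : Finset ι) (x : ∀ j, α j) : ∀ j : S, α j :=
  fun j => x j

/-- Marginal of `p` on the coordinates in `S`: `p_S(y) = Σ_{x : x_S = y} p(x)`. -/
noncomputable def margS (p : (∀ j, α j) → ℝ) (S : Finset ι) (y : ∀ j : S, α j) : ℝ :=
  ∑ x, if restr S x = y then p x else 0

/-- A canonical point of the joint space whose `S`-coordinates are `y`. -/
noncomputable def fill (S : Finset ι) (y : ∀ j : S, α j) : ∀ j, α j :=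
  fun j => if h : j ∈ S then y ⟨j, h⟩ else Classical.arbitrary (α j)

/-- The conditional entropy
`H_p(Xᵢ|X_S) = −Σ_x p(x)·log( p_{S∪{i}}(x_{S∪{i}}) / p_S(x_S) )`;
`H_p(Xᵢ|X₋ᵢ)` is the case `S = Finset.univ.erase i`. -/
noncomputable def condEnt (p : (∀ j, α j) → ℝ) (i : ι) (S : Finset ι) : ℝ :=
  -∑ x, p x * Real.log
    (margS p (insert i S) (restr (insert i S) x) / margS p S (restr S x))

/-- The conditional probability `p(a|y) = p_{S∪{i}}(y,a)/p_S(y)` of `Xᵢ = a`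
given `X_S = y`, for `i ∉ S`. -/
noncomputable def condP (p : (∀ j, α j) → ℝ) (i : ι) (S : Finset ι)
    (y : ∀ j : S, α j) (a : α i) : ℝ :=
  margS p (insert i S) (restr (insert i S) (Function.update (fill S y) i a)) / margS p S y

/-! Every term is an expectation under `p`. Writing `r(x) = p(xᵢ|x_S)` for the ratio inside
`condEnt p i S`, the double sum is `E_p[log (r/θ)]` by the tower property: since `i ∉ S`,
summing over pairs `(x_S, xᵢ)` is summing over `x_{S∪{i}}`, and `θ` is a function of `x_S`.
Likewise `H_p(Xᵢ|X₋ᵢ) = −E_p[log p(xᵢ|x₋ᵢ)]`, because the marginals on `ι` and on `ι ∖ {i}` are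
`p` and `p₋ᵢ`. Splitting the logarithms (all arguments are positive), both sides equal
`E_p[log p(xᵢ|x₋ᵢ)] − E_p[log θ]`. -/

theorem sum_mul_log_div {X : Type*} [Fintype X] (w f g : X → ℝ)
    (hf : ∀ x, f x ≠ 0) (hg : ∀ x, g x ≠ 0) :
    ∑ x, w x * Real.log (f x / g x) = ∑ x, w x * Real.log (f x) - ∑ x, w x * Real.log (g x) := by
  rw [← sum_sub_distrib]
  exact sum_congr rfl fun x _ => by rw [Real.log_div (hf x) (hg x), mul_sub]

section fill

variable {κ : Type} [DecidableEq κ] {β : κ → Type} [∀ k, Nonempty (β k)]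

theorem restr_fill (S : Finset κ) (y : ∀ j : S, β j) : restr S (fill S y) = y := by
  funext j
  simp [restr, fill, j.2]

theorem restr_update_fill {i : κ} {S : Finset κ} (hiS : i ∉ S) (y : ∀ j : S, β j) (a : β i) :
    restr S (Function.update (fill S y) i a) = y := by
  funext j
  have hj : (j : κ) ≠ i := fun h => hiS (h ▸ j.2)
  simp [restr, fill, hj, j.2]

theorem restr_insert_update_fill_restr (i : κ) (S : Finset κ) (x : ∀ j, β j) :
    restr (insert i S) (Function.update (fill S (restr S x)) i (x i)) = restr (insert i S) x := by
  funext ⟨j, hj⟩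
  rcases eq_or_ne j i with rfl | hji
  · simp [restr]
  · simp [restr, fill, hji, (mem_insert.1 hj).resolve_left hji]

theorem bijective_restr_insert_update_fill {i : κ} {S : Finset κ} (hiS : i ∉ S) :
    Function.Bijective fun ya : (∀ j : S, β j) × β i =>
      restr (insert i S) (Function.update (fill S ya.1) i ya.2) := by
  refine Function.bijective_iff_has_inverse.2
    ⟨fun z => (fun j => z ⟨j, mem_insert_of_mem j.2⟩, z ⟨i, mem_insert_self i S⟩),
      fun ⟨y, a⟩ => ?_, fun z => ?_⟩
  · exact Prod.ext (restr_update_fill hiS y a) (by simp [restr])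
  · funext ⟨j, hj⟩
    rcases eq_or_ne j i with rfl | hji
    · simp [restr]
    · simp [restr, fill, hji, (mem_insert.1 hj).resolve_left hji]

end fill

section marginal

variable {κ : Type} [Fintype κ] [DecidableEq κ]
  {β : κ → Type} [∀ k, Fintype (β k)] [∀ k, DecidableEq (β k)]

theorem sum_margS_mul (p : (∀ j, β j) → ℝ) (T : Finset κ) (g : (∀ j : T, β j) → ℝ) :
    ∑ z, margS p T z * g z = ∑ x, p x * g (restr T x) := by
  simp_rw [margS, sum_mul, ite_mul, zero_mul]
  rw [sum_comm]
  exact sum_congr rfl fun x _ => by simp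

theorem margS_univ_restr (p : (∀ j, β j) → ℝ) (x : ∀ j, β j) :
    margS p univ (restr univ x) = p x := by
  have hrestr : ∀ x', restr univ x' = restr univ x ↔ x' = x := fun x' =>
    ⟨fun h => funext fun j => congrFun h ⟨j, mem_univ j⟩, fun h => h ▸ rfl⟩
  simp [margS, hrestr]

theorem margS_univ_erase_restr (p : (∀ j, β j) → ℝ) (i : κ) (x : ∀ j, β j) :
    margS p (univ.erase i) (restr (univ.erase i) x) = marg p i x := by
  have hfiber : univ.filter (fun x' => restr (univ.erase i) x' = restr (univ.erase i) x) =
      univ.image (Function.update x i) := by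
    ext x'
    simp only [mem_filter, mem_univ, true_and, mem_image]
    constructor
    · intro h
      refine ⟨x' i, funext fun j => ?_⟩
      rcases eq_or_ne j i with rfl | hj
      · simp
      · simpa [restr, hj] using (congrFun h ⟨j, by simp [hj]⟩).symm
    · rintro ⟨a, rfl⟩
      funext ⟨j, hj⟩
      simp [restr, (mem_erase.1 hj).1]
  rw [margS, ← sum_filter, hfiber, sum_image fun a _ b _ h => Function.update_injective x i h]
  rfl

theorem condEnt_univ_erase (p : (∀ j, β j) → ℝ) (i : κ) :
    condEnt p i (univ.erase i) = -∑ x, p x * Real.log (fullCond p i x) := by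
  rw [condEnt, insert_erase (mem_univ i)]
  simp only [margS_univ_restr, margS_univ_erase_restr]
  rfl

variable [∀ k, Nonempty (β k)]

theorem margS_pos {p : (∀ j, β j) → ℝ} (hppos : ∀ x, 0 < p x) (S : Finset κ)
    (y : ∀ j : S, β j) : 0 < margS p S y :=
  sum_pos' (fun x _ => by split_ifs <;> simp [(hppos x).le])
    ⟨fill S y, mem_univ _, by simpa [restr_fill] using hppos _⟩

theorem margS_mul_condP (p : (∀ j, β j) → ℝ) (i : κ) {S : Finset κ} {y : ∀ j : S, β j}
    (hy : margS p S y ≠ 0) (a : β i) :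
    margS p S y * condP p i S y a =
      margS p (insert i S) (restr (insert i S) (Function.update (fill S y) i a)) :=
  mul_div_cancel₀ _ hy

theorem condP_restr (p : (∀ j, β j) → ℝ) (i : κ) (S : Finset κ) (x : ∀ j, β j) :
    condP p i S (restr S x) (x i) =
      margS p (insert i S) (restr (insert i S) x) / margS p S (restr S x) := by
  rw [condP, restr_insert_update_fill_restr]

theorem sum_margS_mul_sum_condP_mul {p : (∀ j, β j) → ℝ} (hppos : ∀ x, 0 < p x)
    {i : κ} {S : Finset κ} (hiS : i ∉ S) (g : (∀ j : S, β j) → β i → ℝ) :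
    ∑ y, margS p S y * ∑ a, condP p i S y a * g y a = ∑ x, p x * g (restr S x) (x i) := by
  let e := fun ya : (∀ j : S, β j) × β i =>
    restr (insert i S) (Function.update (fill S ya.1) i ya.2)
  let g' := fun z : ∀ j : (insert i S : Finset κ), β j =>
    g (fun j => z ⟨j, mem_insert_of_mem j.2⟩) (z ⟨i, mem_insert_self i S⟩)
  have hg' : ∀ y a, g y a = g' (e (y, a)) := fun y a => by
    simp only [g', e]
    congr
    · exact (restr_update_fill hiS y a).symm
    · simp [restr]
  calc ∑ y, margS p S y * ∑ a, condP p i S y a * g y a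
      = ∑ ya, margS p (insert i S) (e ya) * g' (e ya) := by
        rw [Fintype.sum_prod_type]
        refine sum_congr rfl fun y _ => ?_
        rw [mul_sum]
        refine sum_congr rfl fun a _ => ?_
        rw [← mul_assoc, margS_mul_condP p i (margS_pos hppos S y).ne', hg' y a]
    _ = ∑ z, margS p (insert i S) z * g' z :=
        Fintype.sum_bijective e (bijective_restr_insert_update_fill hiS) _ _ fun _ => rfl
    _ = ∑ x, p x * g (restr S x) (x i) := sum_margS_mul p (insert i S) g'

end marginal

theorem divergence_decomposition_condEnt_general
    (p : (∀ j, α j) → ℝ) (hppos : ∀ x, 0 < p x)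
    (i : ι) (S : Finset ι) (hiS : i ∉ S)
    (θ : α i → (∀ j, α j) → ℝ) (hθ : IsCPT i θ)
    (hθS : ∀ a x x', restr S x = restr S x' → θ a x = θ a x') :
    ∑ x, p x * Real.log (fullCond p i x / θ (x i) x) =
      (∑ y, margS p S y *
        ∑ a, condP p i S y a * Real.log (condP p i S y a / θ a (fill S y))) +
      condEnt p i S - condEnt p i (Finset.univ.erase i) := by
  let r := fun x => margS p (insert i S) (restr (insert i S) x) / margS p S (restr S x)
  have hr : ∀ x, r x ≠ 0 := fun x => (div_pos (margS_pos hppos _ _) (margS_pos hppos _ _)).ne'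
  have hfc : ∀ x, fullCond p i x ≠ 0 := fun x =>
    (div_pos (hppos x) (sum_pos (fun _ _ => hppos _) univ_nonempty)).ne'
  have hθ0 : ∀ x, θ (x i) x ≠ 0 := fun x => (hθ.1 _ _).ne'
  have htower : ∑ y, margS p S y *
      ∑ a, condP p i S y a * Real.log (condP p i S y a / θ a (fill S y)) =
        ∑ x, p x * Real.log (r x / θ (x i) x) := by
    rw [sum_margS_mul_sum_condP_mul hppos hiS]
    refine sum_congr rfl fun x _ => ?_
    rw [condP_restr, hθS _ _ _ (restr_fill S (restr S x))]
  have hS : condEnt p i S = -∑ x, p x * Real.log (r x) := rfl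
  rw [htower, sum_mul_log_div _ _ _ hfc hθ0,
    sum_mul_log_div _ _ _ hr hθ0, hS, condEnt_univ_erase]
  ring

/-- decomposition of the divergence to a full-conditional manifold
in terms of conditional entropies:
`Σ_x p(x)·log( p(xᵢ|x₋ᵢ)/θ(xᵢ,x) )
  = Σ_y p_S(y)·Σ_a p(a|y)·log( p(a|y)/θ_S(a,y) ) + H_p(Xᵢ|X_S) − H_p(Xᵢ|X₋ᵢ)`,
for a CPT `θ` at node `i` depending only on the coordinates in `S` (with `i ∉ S`);
`θ_S(a,y)` is the common value of `θ(a,x)` over `x` with `x_S = y`. -/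
theorem divergence_decomposition_condEnt
    (p : (∀ j, α j) → ℝ) (hp : IsDist p) (hppos : ∀ x, 0 < p x)
    (i : ι) (S : Finset ι) (hiS : i ∉ S)
    (θ : α i → (∀ j, α j) → ℝ) (hθ : IsCPT i θ)
    (hθS : ∀ a x x', restr S x = restr S x' → θ a x = θ a x') :
    ∑ x, p x * Real.log (fullCond p i x / θ (x i) x) =
      (∑ y, margS p S y *
        ∑ a, condP p i S y a * Real.log (condP p i S y a / θ a (fill S y))) +
      condEnt p i S - condEnt p i (Finset.univ.erase i) :=
  divergence_decomposition_condEnt_general p hppos i S hiS θ hθ hθS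
end

section
/- The full-conditional divergence is the Bregman divergence of the average negative conditional entropy: let c_i ≥ 0 with Σ_i c_i = 1, define f(p) = Σ_i c_i · Σ_x p(x)·log p(xᵢ|x₋ᵢ) for positive distributions p (so f(p) = −Σ_i c_i H_p(Xᵢ|X₋ᵢ)), and g_q(x) = Σ_i c_i·log q(xᵢ|x₋ᵢ). Then for all positive distributions p and q, FC(p‖q) = f(p) − f(q) − Σ_x ( p(x) − q(x) )·g_q(x). -/
open Finset

variable {ι : Type} [Fintype ι] [DecidableEq ι] [Nonempty ι]
  {α : ι → Type} [∀ i, Fintype (α i)] [∀ i, DecidableEq (α i)] [∀ i, Nonempty (α i)]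

/-- The full-conditional divergence
`FC(p‖q) = Σ_i c_i·Σ_x p(x)·log( p(xᵢ|x₋ᵢ)/q(xᵢ|x₋ᵢ) )`. -/
noncomputable def FC (c : ι → ℝ) (p q : (∀ j, α j) → ℝ) : ℝ :=
  ∑ i, c i * ∑ x, p x * Real.log (fullCond p i x / fullCond q i x)

/-!
With `g_r(x) = Σ_i c_i·log r(xᵢ|x₋ᵢ)`, the functional is `f(r) = ⟨r, g_r⟩`, so its Bregman
divergence `f(p) − f(q) − ⟨p − q, g_q⟩` collapses to `⟨p, g_p − g_q⟩`; for positive `p`, `q`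
this is `FC(p‖q)` because the log of a quotient of full conditionals is the difference of logs.
-/

open Real

lemma sum_mul_sum_mul_comm {κ X : Type*} [Fintype κ] [Fintype X]
    (c : κ → ℝ) (r : X → ℝ) (h : κ → X → ℝ) :
    ∑ k, c k * ∑ x, r x * h k x = ∑ x, r x * ∑ k, c k * h k x := by
  simp only [mul_sum]
  rw [sum_comm]
  exact sum_congr rfl fun _ _ => sum_congr rfl fun _ _ => mul_left_comm _ _ _

lemma sum_mul_sub_sum_mul_sub_sum_sub_mul {X : Type*} [Fintype X] (p q φ ψ : X → ℝ) :
    ∑ x, p x * φ x - ∑ x, q x * ψ x - ∑ x, (p x - q x) * ψ x = ∑ x, p x * (φ x - ψ x) := by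
  simp only [mul_sub, sub_mul, sum_sub_distrib]
  ring

omit [Fintype ι] [Nonempty ι] [∀ i, DecidableEq (α i)] in
lemma fullCond_pos {r : (∀ j, α j) → ℝ} (hr : ∀ x, 0 < r x) (i : ι) (x : ∀ j, α j) :
    0 < fullCond r i x :=
  div_pos (hr x) (sum_pos (fun _ _ => hr _) univ_nonempty)

omit [Nonempty ι] [∀ i, DecidableEq (α i)] in
lemma FC_eq_sum_mul_sub_log (c : ι → ℝ) {p q : (∀ j, α j) → ℝ}
    (hp : ∀ x, 0 < p x) (hq : ∀ x, 0 < q x) :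
    FC c p q = ∑ i, c i * ∑ x, p x * (log (fullCond p i x) - log (fullCond q i x)) := by
  simp only [FC, log_div (fullCond_pos hp _ _).ne' (fullCond_pos hq _ _).ne']

theorem FC_is_Bregman_general
    (c : ι → ℝ)
    (p q : (∀ j, α j) → ℝ) (hppos : ∀ x, 0 < p x)
    (hqpos : ∀ x, 0 < q x) :
    FC c p q =
      (∑ i, c i * ∑ x, p x * Real.log (fullCond p i x)) -
      (∑ i, c i * ∑ x, q x * Real.log (fullCond q i x)) -
      ∑ x, (p x - q x) * (∑ i, c i * Real.log (fullCond q i x)) := by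
  rw [FC_eq_sum_mul_sub_log c hppos hqpos, sum_mul_sum_mul_comm c p, sum_mul_sum_mul_comm c p,
    sum_mul_sum_mul_comm c q, sum_mul_sub_sum_mul_sub_sum_sub_mul]
  simp only [mul_sub, sum_sub_distrib]

/-- the full-conditional divergence is the Bregman divergence of
the average negative conditional entropy
`f(p) = Σ_i c_i·Σ_x p(x)·log p(xᵢ|x₋ᵢ)`, with gradient term
`g_q(x) = Σ_i c_i·log q(xᵢ|x₋ᵢ)`:
`FC(p‖q) = f(p) − f(q) − Σ_x (p(x) − q(x))·g_q(x)`. -/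
theorem FC_is_Bregman
    (c : ι → ℝ) (hc0 : ∀ i, 0 ≤ c i) (hc1 : ∑ i, c i = 1)
    (p q : (∀ j, α j) → ℝ) (hp : IsDist p) (hppos : ∀ x, 0 < p x)
    (hq : IsDist q) (hqpos : ∀ x, 0 < q x) :
    FC c p q =
      (∑ i, c i * ∑ x, p x * Real.log (fullCond p i x)) -
      (∑ i, c i * ∑ x, q x * Real.log (fullCond q i x)) -
      ∑ x, (p x - q x) * (∑ i, c i * Real.log (fullCond q i x)) :=
  FC_is_Bregman_general c p q hppos hqpos
end
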